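/- arXiv:2509.07387 — 3 statements merged into one kernel-verified Lean document; each statement's English description precedes it below -/
import Mathlib

section
/- Fix integers T ≥ 1, ω ≥ 1 and w with 1 ≤ w ≤ ω; define μ(t) = min(w, T − t + 1) for t ∈ {1,…,T}. Let b : {1,…,T} → ℝ and let z : {1,…,T+1} × {1,…,ω−1} → ℝ satisfy z(1,k) = 0 for all k ∈ {1,…,ω−1}, and for all t ∈ {1,…,T}, k ∈ {1,…,ω−1}: z(t+1,k) = (z(t,k+1) if k ≤ ω−2, else 0) + (b(t) if μ(t) = k+1, else 0). Then for every t ∈ {1,…,T}: Σ_{k=1}^{ω−1} z(t,k) = Σ_{s = max(t−w+1, 1)}^{t−1} b(s); that is, the total number of nurses still on secondment at the beginning of day t equals the windowed sum of deployments over the last w − 1 days. -/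
/-- The total number of nurses still on secondment at the beginning of
day `t` equals the windowed sum of deployments over the last `w − 1` days. -/
theorem secondment_state_window_sum (T ω w : ℕ) (hT : 1 ≤ T) (hω : 1 ≤ ω)
    (hw1 : 1 ≤ w) (hw2 : w ≤ ω) (b : ℕ → ℝ) (z : ℕ → ℕ → ℝ)
    (hinit : ∀ k, 1 ≤ k → k ≤ ω - 1 → z 1 k = 0)
    (hrec : ∀ t, 1 ≤ t → t ≤ T → ∀ k, 1 ≤ k → k ≤ ω - 1 →
      z (t + 1) k = (if k ≤ ω - 2 then z t (k + 1) else 0) +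
        (if min w (T - t + 1) = k + 1 then b t else 0)) :
    ∀ t, 1 ≤ t → t ≤ T →
      ∑ k ∈ Finset.Icc 1 (ω - 1), z t k =
        ∑ s ∈ Finset.Icc (max (t - w + 1) 1) (t - 1), b s := by
  have key : ∀ t, 1 ≤ t → t ≤ T → ∀ m, 1 ≤ m →
      ∑ k ∈ Finset.Icc m (ω - 1), z t k =
        if m + t ≤ T + 1 then
          ∑ s ∈ Finset.Icc (max (t + m - w) 1) (t - 1), b s else 0 := by
    intro t ht
    induction t, ht using Nat.le_induction with
    | base =>
      intro _ m hm
      rw [Finset.sum_eq_zero (fun k hk => by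
        simp only [Finset.mem_Icc] at hk
        exact hinit k (le_trans hm hk.1) hk.2)]
      rw [Finset.Icc_eq_empty (by omega : ¬ max (1 + m - w) 1 ≤ 1 - 1)]
      simp
    | succ t ht ih =>
      intro ht1 m hm
      have htT : t ≤ T := by omega
      have hsum : ∑ k ∈ Finset.Icc m (ω - 1), z (t + 1) k =
          (∑ k ∈ Finset.Icc m (ω - 1), (if k ≤ ω - 2 then z t (k + 1) else 0)) +
          ∑ k ∈ Finset.Icc m (ω - 1), (if min w (T - t + 1) = k + 1 then b t else 0) := by
        rw [← Finset.sum_add_distrib]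
        refine Finset.sum_congr rfl fun k hk => ?_
        simp only [Finset.mem_Icc] at hk
        exact hrec t ht htT k (by omega) hk.2
      have hA : ∑ k ∈ Finset.Icc m (ω - 1), (if k ≤ ω - 2 then z t (k + 1) else 0) =
          ∑ k ∈ Finset.Icc (m + 1) (ω - 1), z t k := by
        rw [← Finset.sum_filter]
        have hfil : (Finset.Icc m (ω - 1)).filter (· ≤ ω - 2) = Finset.Icc m (ω - 2) := by
          ext x
          simp only [Finset.mem_filter, Finset.mem_Icc]
          omega
        rw [hfil]
        apply Finset.sum_nbij' (fun k => k + 1) (fun k => k - 1) <;>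
          intro a ha <;> simp only [Finset.mem_Icc] at * <;> omega
      have hB : ∑ k ∈ Finset.Icc m (ω - 1), (if min w (T - t + 1) = k + 1 then b t else 0) =
          if m + 1 ≤ w ∧ m + t ≤ T then b t else 0 := by
        rw [Finset.sum_congr rfl (fun k hk => if_congr
          (show min w (T - t + 1) = k + 1 ↔ k = min w (T - t + 1) - 1 by omega) rfl rfl)]
        rw [Finset.sum_ite_eq' (Finset.Icc m (ω - 1)) (min w (T - t + 1) - 1)
          (fun _ => b t)]
        congr 1
        simp only [Finset.mem_Icc, eq_iff_iff]
        omega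
      rw [hsum, hA, hB, ih htT (m + 1) (by omega)]
      by_cases hc : m + t ≤ T
      · rw [if_pos (by omega : m + 1 + t ≤ T + 1), if_pos (by omega : m + (t + 1) ≤ T + 1)]
        by_cases hw' : m + 1 ≤ w
        · rw [if_pos ⟨hw', hc⟩]
          have hL : max (t + 1 + m - w) 1 ≤ (t - 1) + 1 := by omega
          have hstep := Finset.sum_Icc_succ_top hL b
          have h1 : (t - 1) + 1 = (t + 1) - 1 := by omega
          have h2 : max (t + (m + 1) - w) 1 = max (t + 1 + m - w) 1 := by omega
          rw [h1] at hstep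
          rw [h2, hstep]
          norm_num
        · rw [if_neg (by tauto)]
          rw [Finset.Icc_eq_empty (by omega : ¬ max (t + (m + 1) - w) 1 ≤ t - 1),
            Finset.Icc_eq_empty (by omega : ¬ max (t + 1 + m - w) 1 ≤ (t + 1) - 1)]
          simp
      · rw [if_neg (by omega), if_neg (by omega), if_neg (by omega)]
        simp
  intro t ht htT
  rw [key t ht htT 1 le_rfl, if_pos (by omega)]
  congr 2
  omega
end

section
/- Fix integers T ≥ 1, ω ≥ 1, a finite index set J, and for each j ∈ J an integer w_j with 1 ≤ w_j ≤ ω; define μ_j(t) = min(w_j, T − t + 1). For each j let b_j : {1,…,T} → ℝ and let z_j : {1,…,T+1} × {1,…,ω−1} → ℝ satisfy z_j(1,k) = 0 for all k, and for all t ∈ {1,…,T}, k ∈ {1,…,ω−1}: z_j(t+1,k) = (z_j(t,k+1) if k ≤ ω−2, else 0) + (b_j(t) if μ_j(t) = k+1, else 0). Then for every t ∈ {1,…,T} and every K ∈ ℝ, the windowed capacity constraint Σ_{j∈J} Σ_{s = max(t−w_j+1, 1)}^{t} b_j(s) ≤ K holds if and only if Σ_{j∈J} b_j(t) ≤ K −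 Σ_{j∈J} Σ_{k=1}^{ω−1} z_j(t,k). -/
/-- Equivalence of the windowed-sum capacity constraint and the
state-based capacity constraint: for each day `t` and capacity `K`, the windowed deployment
sums over all destinations are at most `K` iff today's deployments are at most `K` minus the
total number of nurses currently on secondment. -/
theorem capacity_constraint_equiv {J : Type*} [Fintype J] (T ω : ℕ)
    (hT : 1 ≤ T) (hω : 1 ≤ ω) (w : J → ℕ) (hw1 : ∀ j, 1 ≤ w j) (hw2 : ∀ j, w j ≤ ω)
    (b : J → ℕ → ℝ) (z : J → ℕ → ℕ → ℝ)
    (hinit : ∀ j, ∀ k, 1 ≤ k → k ≤ ω - 1 → z j 1 k = 0)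
    (hrec : ∀ j, ∀ t, 1 ≤ t → t ≤ T → ∀ k, 1 ≤ k → k ≤ ω - 1 →
      z j (t + 1) k = (if k ≤ ω - 2 then z j t (k + 1) else 0) +
        (if min (w j) (T - t + 1) = k + 1 then b j t else 0)) :
    ∀ t, 1 ≤ t → t ≤ T → ∀ K : ℝ,
      ((∑ j, ∑ s ∈ Finset.Icc (max (t - w j + 1) 1) t, b j s) ≤ K ↔
        (∑ j, b j t) ≤ K - ∑ j, ∑ k ∈ Finset.Icc 1 (ω - 1), z j t k) := by
  -- explicit formula for z
  have zform : ∀ j, ∀ t, 1 ≤ t → t ≤ T → ∀ k, 1 ≤ k → k ≤ ω - 1 →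
      z j t k = ∑ s ∈ Finset.Ico 1 t,
        (if min (w j) (T - s + 1) = k + (t - s) then b j s else 0) := by
    intro j t ht
    induction t, ht using Nat.le_induction with
    | base =>
      intro _ k hk1 hk2
      simp [hinit j k hk1 hk2]
    | succ t ht ih =>
      intro htT k hk1 hk2
      have htT' : t ≤ T := by omega
      rw [hrec j t ht htT' k hk1 hk2,
        Finset.sum_Ico_succ_top (by omega : 1 ≤ t)]
      have hlast : (if min (w j) (T - t + 1) = k + (t + 1 - t) then b j t else 0)
          = (if min (w j) (T - t + 1) = k + 1 then b j t else 0) := by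
        norm_num
      rw [hlast]
      congr 1
      by_cases hk : k ≤ ω - 2
      · rw [if_pos hk, ih htT' (k + 1) (by omega) (by omega)]
        apply Finset.sum_congr rfl
        intro s hs
        simp only [Finset.mem_Ico] at hs
        have : k + 1 + (t - s) = k + (t + 1 - s) := by omega
        rw [this]
      · rw [if_neg hk]
        symm
        apply Finset.sum_eq_zero
        intro s hs
        simp only [Finset.mem_Ico] at hs
        have h1 : min (w j) (T - s + 1) ≤ w j := min_le_left _ _
        have h2 : w j ≤ ω := hw2 j
        rw [if_neg (by omega)]
  -- summed formula
  have zsum : ∀ j, ∀ t, 1 ≤ t → t ≤ T →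
      ∑ k ∈ Finset.Icc 1 (ω - 1), z j t k
        = ∑ s ∈ Finset.Icc (t - w j + 1) (t - 1), b j s := by
    intro j t ht htT
    have : ∑ k ∈ Finset.Icc 1 (ω - 1), z j t k
        = ∑ s ∈ Finset.Ico 1 t, (if t - w j + 1 ≤ s then b j s else 0) := by
      rw [Finset.sum_congr rfl fun k hk => by
        simp only [Finset.mem_Icc] at hk
        exact zform j t ht htT k hk.1 hk.2]
      rw [Finset.sum_comm]
      apply Finset.sum_congr rfl
      intro s hs
      simp only [Finset.mem_Ico] at hs
      have h1 : min (w j) (T - s + 1) ≤ w j := min_le_left _ _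
      have h2 : min (w j) (T - s + 1) ≤ T - s + 1 := min_le_right _ _
      have h3 : min (w j) (T - s + 1) = w j ∨ min (w j) (T - s + 1) = T - s + 1 :=
        min_choice _ _
      have hw1j := hw1 j
      have hw2j := hw2 j
      by_cases hC : t - w j + 1 ≤ s
      · rw [if_pos hC]
        set k0 := min (w j) (T - s + 1) - (t - s) with hk0
        have hsum : ∀ k ∈ Finset.Icc 1 (ω - 1),
            (if min (w j) (T - s + 1) = k + (t - s) then b j s else 0)
              = (if k = k0 then b j s else 0) := by
          intro k hk
          simp only [Finset.mem_Icc] at hk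
          have hiff : (min (w j) (T - s + 1) = k + (t - s)) ↔ (k = k0) := by omega
          rw [if_congr hiff rfl rfl]
        rw [Finset.sum_congr rfl hsum, Finset.sum_ite_eq' _ k0 (fun _ => b j s),
          if_pos (by simp only [Finset.mem_Icc]; omega)]
      · rw [if_neg hC]
        apply Finset.sum_eq_zero
        intro k hk
        simp only [Finset.mem_Icc] at hk
        rw [if_neg (by omega)]
    rw [this, ← Finset.sum_filter]
    apply Finset.sum_congr _ fun _ _ => rfl
    ext s
    simp only [Finset.mem_filter, Finset.mem_Ico, Finset.mem_Icc]
    omega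
  -- main
  intro t ht htT K
  have hsplit : ∀ j, ∑ s ∈ Finset.Icc (max (t - w j + 1) 1) t, b j s
      = (∑ k ∈ Finset.Icc 1 (ω - 1), z j t k) + b j t := by
    intro j
    have hw1j := hw1 j
    have hmax : max (t - w j + 1) 1 = t - w j + 1 := by omega
    have key := Finset.sum_Icc_succ_top (a := t - w j + 1) (b := t - 1)
      (by omega) (b j)
    have ht1 : t - 1 + 1 = t := by omega
    rw [ht1] at key
    rw [hmax, key, zsum j t ht htT]
  rw [Finset.sum_congr rfl fun j _ => hsplit j, Finset.sum_add_distrib]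
  constructor <;> intro h <;> linarith
end

section
/- Fix integers T ≥ 1, ω ≥ 1, a finite index set J, and for each ordered pair (u,v) ∈ J × J an integer w_{uv} with 1 ≤ w_{uv} ≤ ω; define μ_{uv}(t) = min(w_{uv}, T − t + 1). For each pair let b_{uv} : {1,…,T} → ℝ and let z_{uv} : {1,…,T+1} × {1,…,ω−1} → ℝ satisfy z_{uv}(1,k) = 0 for all k, and the recursion z_{uv}(t+1,k) = (z_{uv}(t,k+1) if k ≤ ω−2, else 0) + (b_{uv}(t) if μ_{uv}(t) = k+1, else 0) for t ∈ {1,…,T}, k ∈ {1,…,ω−1}. Fix i ∈ J, K ∈ ℝ and ξ ∈ ℝ. Then for every t ∈ {1,…,T}, the two expressions for the staffing imbalance at location i on day t coincide: ξ − ( K − Σ_{j∈J} Σ_{s=max(t−w_{ij}+1,1)}^{t} b_{ij}(s) + Σ_{j∈J} Σ_{s=max(t−w_{ji}+1,1)}^{t} b_{ji}(s) ) = ξ − ( K − Σ_{j∈J} Σ_{k=1}^{ω−1} z_{ij}(t,k) − Σ_{j∈J} b_{ij}(t) + Σ_{j∈J} Σ_{k=1}^{ω−1} z_{ji}(t,k)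 + Σ_{j∈J} b_{ji}(t) ). -/
open Finset

private lemma z_closed {J : Type*} (T ω : ℕ) (w : J → J → ℕ)
    (hw2 : ∀ u v, w u v ≤ ω)
    (b : J → J → ℕ → ℝ) (z : J → J → ℕ → ℕ → ℝ)
    (hinit : ∀ u v, ∀ k, 1 ≤ k → k ≤ ω - 1 → z u v 1 k = 0)
    (hrec : ∀ u v, ∀ t, 1 ≤ t → t ≤ T → ∀ k, 1 ≤ k → k ≤ ω - 1 →
      z u v (t + 1) k = (if k ≤ ω - 2 then z u v t (k + 1) else 0) +
        (if min (w u v) (T - t + 1) = k + 1 then b u v t else 0))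
    (u v : J) :
    ∀ t, 1 ≤ t → t ≤ T + 1 → ∀ k, 1 ≤ k → k ≤ ω - 1 →
      z u v t k = ∑ s ∈ Icc 1 (t - 1),
        if min (w u v) (T - s + 1) = k + (t - s) then b u v s else 0 := by
  intro t ht
  induction t, ht using Nat.le_induction with
  | base =>
    intro _ k hk1 hk2
    simp [hinit u v k hk1 hk2]
  | succ n hn ih =>
    intro hle k hk1 hk2
    obtain ⟨m, rfl⟩ : ∃ m, n = m + 1 := ⟨n - 1, by omega⟩
    rw [hrec u v (m + 1) (by omega) (by omega) k hk1 hk2]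
    rw [show m + 1 + 1 - 1 = m + 1 from rfl,
      Finset.sum_Icc_succ_top (by omega : 1 ≤ m + 1)]
    congr 1
    · by_cases h : k ≤ ω - 2
      · rw [if_pos h, ih (by omega) (k + 1) (by omega) (by omega)]
        refine Finset.sum_congr rfl fun s hs => ?_
        have hs' := Finset.mem_Icc.mp hs
        have : k + 1 + (m + 1 - s) = k + (m + 1 + 1 - s) := by omega
        rw [this]
      · rw [if_neg h]
        symm
        apply Finset.sum_eq_zero
        intro s hs
        have hs' := Finset.mem_Icc.mp hs
        have hwle := hw2 u v
        rw [if_neg]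
        omega
    · rw [show m + 1 + 1 - (m + 1) = 1 from by omega]

private lemma zsum {J : Type*} (T ω : ℕ) (hω : 1 ≤ ω) (w : J → J → ℕ)
    (hw1 : ∀ u v, 1 ≤ w u v) (hw2 : ∀ u v, w u v ≤ ω)
    (b : J → J → ℕ → ℝ) (z : J → J → ℕ → ℕ → ℝ)
    (hinit : ∀ u v, ∀ k, 1 ≤ k → k ≤ ω - 1 → z u v 1 k = 0)
    (hrec : ∀ u v, ∀ t, 1 ≤ t → t ≤ T → ∀ k, 1 ≤ k → k ≤ ω - 1 →
      z u v (t + 1) k = (if k ≤ ω - 2 then z u v t (k + 1) else 0) +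
        (if min (w u v) (T - t + 1) = k + 1 then b u v t else 0))
    (u v : J) :
    ∀ t, 1 ≤ t → t ≤ T →
      (∑ k ∈ Icc 1 (ω - 1), z u v t k) + b u v t
        = ∑ s ∈ Icc (max (t - w u v + 1) 1) t, b u v s := by
  intro t ht1 ht2
  obtain ⟨m, rfl⟩ : ∃ m, t = m + 1 := ⟨t - 1, by omega⟩
  have hmax : max (m + 1 - w u v + 1) 1 = m + 1 - w u v + 1 := by omega
  rw [hmax]
  have hcf : ∀ k ∈ Icc 1 (ω - 1), z u v (m + 1) k =
      ∑ s ∈ Icc 1 (m + 1 - 1),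
        if min (w u v) (T - s + 1) = k + (m + 1 - s) then b u v s else 0 := by
    intro k hk
    have hk' := Finset.mem_Icc.mp hk
    exact z_closed T ω w hw2 b z hinit hrec u v (m + 1) (by omega) (by omega) k hk'.1 hk'.2
  rw [Finset.sum_congr rfl hcf, Finset.sum_comm]
  have hinner : ∀ s ∈ Icc 1 (m + 1 - 1),
      (∑ k ∈ Icc 1 (ω - 1),
        if min (w u v) (T - s + 1) = k + (m + 1 - s) then b u v s else 0)
      = if m + 1 - w u v + 1 ≤ s then b u v s else 0 := by
    intro s hs
    have hs' := Finset.mem_Icc.mp hs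
    have hwle := hw2 u v
    have hwge := hw1 u v
    by_cases hc : m + 1 - w u v + 1 ≤ s
    · rw [if_pos hc]
      rw [Finset.sum_eq_single (min (w u v) (T - s + 1) - (m + 1 - s))]
      · rw [if_pos (by omega)]
      · intro k hk hne
        have hk' := Finset.mem_Icc.mp hk
        rw [if_neg]
        omega
      · intro habs
        exact absurd (Finset.mem_Icc.mpr ⟨by omega, by omega⟩) habs
    · rw [if_neg hc]
      apply Finset.sum_eq_zero
      intro k hk
      have hk' := Finset.mem_Icc.mp hk
      rw [if_neg]
      omega
  rw [Finset.sum_congr rfl hinner, ← Finset.sum_filter]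
  have hset : (Icc 1 (m + 1 - 1)).filter (fun s => m + 1 - w u v + 1 ≤ s)
      = Icc (m + 1 - w u v + 1) m := by
    ext x
    simp only [Finset.mem_filter, Finset.mem_Icc]
    omega
  have hstep : m + 1 - w u v + 1 ≤ m + 1 := by have := hw1 u v; omega
  rw [hset, Finset.sum_Icc_succ_top hstep]

/-- The two expressions for the staffing imbalance at location `i` on day
`t` coincide: the windowed-deployment-sum form equals the state-based form. -/
theorem imbalance_expressions_eq {J : Type*} [Fintype J] (T ω : ℕ)
    (hT : 1 ≤ T) (hω : 1 ≤ ω) (w : J → J → ℕ)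
    (hw1 : ∀ u v, 1 ≤ w u v) (hw2 : ∀ u v, w u v ≤ ω)
    (b : J → J → ℕ → ℝ) (z : J → J → ℕ → ℕ → ℝ)
    (hinit : ∀ u v, ∀ k, 1 ≤ k → k ≤ ω - 1 → z u v 1 k = 0)
    (hrec : ∀ u v, ∀ t, 1 ≤ t → t ≤ T → ∀ k, 1 ≤ k → k ≤ ω - 1 →
      z u v (t + 1) k = (if k ≤ ω - 2 then z u v t (k + 1) else 0) +
        (if min (w u v) (T - t + 1) = k + 1 then b u v t else 0))
    (i : J) (K : ℝ) (ξ : ℝ) :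
    ∀ t, 1 ≤ t → t ≤ T →
      ξ - (K - (∑ j, ∑ s ∈ Finset.Icc (max (t - w i j + 1) 1) t, b i j s)
            + ∑ j, ∑ s ∈ Finset.Icc (max (t - w j i + 1) 1) t, b j i s) =
      ξ - (K - (∑ j, ∑ k ∈ Finset.Icc 1 (ω - 1), z i j t k) - (∑ j, b i j t)
            + (∑ j, ∑ k ∈ Finset.Icc 1 (ω - 1), z j i t k) + ∑ j, b j i t) := by
  intro t ht1 ht2
  have h1 : ∀ j : J, ∑ s ∈ Finset.Icc (max (t - w i j + 1) 1) t, b i j s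
      = (∑ k ∈ Finset.Icc 1 (ω - 1), z i j t k) + b i j t :=
    fun j => (zsum T ω hω w hw1 hw2 b z hinit hrec i j t ht1 ht2).symm
  have h2 : ∀ j : J, ∑ s ∈ Finset.Icc (max (t - w j i + 1) 1) t, b j i s
      = (∑ k ∈ Finset.Icc 1 (ω - 1), z j i t k) + b j i t :=
    fun j => (zsum T ω hω w hw1 hw2 b z hinit hrec j i t ht1 ht2).symm
  rw [Finset.sum_congr rfl fun j _ => h1 j, Finset.sum_congr rfl fun j _ => h2 j,
    Finset.sum_add_distrib, Finset.sum_add_distrib]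
  ring
end
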